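/- arXiv:1212.0991 — 3 statements merged into one kernel-verified Lean document; each statement's English description precedes it below -/
import Mathlib

section
/- With the notation in the context, the polynomial identity y₃·r₁ − y₁·r₃ = A₂·γ₄·φ₆ holds in the polynomial ring ℚ[a₁,a₂,b₁,b₂,b₃,c₁,c₂,a₁',a₂',b₁',b₂',b₃',c₁',c₂',y₁,y₂,y₃]. -/
/-!
Since `A, B, C` are the coefficients of `w'(y)·w − w(y)·w'`, and the cubic form is linear in its
coefficients, the cubic form with coefficients `A, B, C` vanishes at `y`: it equals
`w'(y)w(y) − w(y)w'(y)`. After multiplying by `y₁y₂`, the quotients `q₁, q₂, q₃` are replaced by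
their numerators, and the identity becomes `−A₁A₂²` times this vanishing cubic.
-/

open MvPolynomial

noncomputable section

/-- The polynomial ring ℚ[a₁,a₂,b₁,b₂,b₃,c₁,c₂,a₁',a₂',b₁',b₂',b₃',c₁',c₂',y₁,y₂,y₃]. -/
abbrev R17 : Type := MvPolynomial (Fin 17) ℚ

def a1 : R17 := X 0
def a2 : R17 := X 1
def b1 : R17 := X 2
def b2 : R17 := X 3
def b3 : R17 := X 4
def c1 : R17 := X 5
def c2 : R17 := X 6
def a1' : R17 := X 7
def a2' : R17 := X 8
def b1' : R17 := X 9
def b2' : R17 := X 10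
def b3' : R17 := X 11
def c1' : R17 := X 12
def c2' : R17 := X 13
def y1 : R17 := X 14
def y2 : R17 := X 15
def y3 : R17 := X 16

/-- w evaluated at y. -/
def w : R17 :=
  y3^2*(a1*y1 + a2*y2) + y3*(b1*y1^2 + b2*y1*y2 + b3*y2^2) + c1*y1^2*y2 + c2*y1*y2^2
/-- w' evaluated at y. -/
def w' : R17 :=
  y3^2*(a1'*y1 + a2'*y2) + y3*(b1'*y1^2 + b2'*y1*y2 + b3'*y2^2) + c1'*y1^2*y2 + c2'*y1*y2^2

def A1 : R17 := a1*w' - a1'*w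
def A2 : R17 := a2*w' - a2'*w
def B1 : R17 := b1*w' - b1'*w
def B2 : R17 := b2*w' - b2'*w
def B3 : R17 := b3*w' - b3'*w
def C1 : R17 := c1*w' - c1'*w
def C2 : R17 := c2*w' - c2'*w

def r1' : R17 := B1*A2^2 - B2*A1*A2 + B3*A1^2
def r3' : R17 := A2*C1 - A1*C2
def r1 : R17 := A2*r1'
def r2 : R17 := -(A1*r1')
def r3 : R17 := A1*A2*r3'
def γ4 : R17 := y1*A1 + y2*A2
def κ : R17 := a1*b1' - a1'*b1

/-- C₅, in terms of the three exact quotients q₁ = (B₁+κy₁y₃²)/y₂,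
q₂ = (A₁−κy₁²y₃)/y₂, q₃ = (A₂y₃+B₃y₂)/y₁. -/
def C5 (q1 q2 q3 : R17) : R17 := A2*q1 + q2*q3 + κ*B3*y1*y3
def φ6 (q1 q2 q3 : R17) : R17 := A1*C2 + y3 * C5 q1 q2 q3
def ψ6 (q1 q2 q3 : R17) : R17 := A2*C1 + y3 * C5 q1 q2 q3

section CubicForm

variable {R : Type*} [CommRing R]

def cubicForm (A1 A2 B1 B2 B3 C1 C2 y1 y2 y3 : R) : R :=
  y3^2*(A1*y1 + A2*y2) + y3*(B1*y1^2 + B2*y1*y2 + B3*y2^2) + C1*y1^2*y2 + C2*y1*y2^2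

theorem cubicForm_mul_sub_mul (s t a1 a2 b1 b2 b3 c1 c2 a1' a2' b1' b2' b3' c1' c2' y1 y2 y3 : R) :
    cubicForm (a1*s - a1'*t) (a2*s - a2'*t) (b1*s - b1'*t) (b2*s - b2'*t) (b3*s - b3'*t)
        (c1*s - c1'*t) (c2*s - c2'*t) y1 y2 y3
      = s * cubicForm a1 a2 b1 b2 b3 c1 c2 y1 y2 y3
        - t * cubicForm a1' a2' b1' b2' b3' c1' c2' y1 y2 y3 := by
  unfold cubicForm
  ring

theorem eq_of_cubicForm_eq_zero [IsDomain R] {A1 A2 B1 B2 B3 C1 C2 k y1 y2 y3 q1 q2 q3 : R}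
    (hy1 : y1 ≠ 0) (hy2 : y2 ≠ 0) (hcubic : cubicForm A1 A2 B1 B2 B3 C1 C2 y1 y2 y3 = 0)
    (h1 : y2 * q1 = B1 + k*y1*y3^2)
    (h2 : y2 * q2 = A1 - k*y1^2*y3)
    (h3 : y1 * q3 = A2*y3 + B3*y2) :
    y3 * (A2 * (B1*A2^2 - B2*A1*A2 + B3*A1^2)) - y1 * (A1*A2*(A2*C1 - A1*C2))
      = A2 * (y1*A1 + y2*A2) * (A1*C2 + y3 * (A2*q1 + q2*q3 + k*B3*y1*y3)) := by
  refine mul_left_cancel₀ (mul_ne_zero hy1 hy2) ?_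
  unfold cubicForm at hcubic
  linear_combination (-A1*A2^2) * hcubic
    - A2*(y1*A1 + y2*A2)*y3*(A2*y1)*h1
    - A2*(y1*A1 + y2*A2)*y3*(y1*q3)*h2
    - A2*(y1*A1 + y2*A2)*y3*(A1 - k*y1^2*y3)*h3

end CubicForm

theorem cubicForm_A_B_C_eq_zero : cubicForm A1 A2 B1 B2 B3 C1 C2 y1 y2 y3 = 0 := by
  rw [A1, A2, B1, B2, B3, C1, C2, cubicForm_mul_sub_mul]
  exact sub_eq_zero.2 (mul_comm w' w)

/-- The identity y₃·r₁ − y₁·r₃ = A₂·γ₄·φ₆. -/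
theorem stmt0 (q1 q2 q3 : R17)
    (h1 : y2 * q1 = B1 + κ*y1*y3^2)
    (h2 : y2 * q2 = A1 - κ*y1^2*y3)
    (h3 : y1 * q3 = A2*y3 + B3*y2) :
    y3 * r1 - y1 * r3 = A2 * γ4 * φ6 q1 q2 q3 := by
  rw [r1, r3, r1', r3', γ4, φ6, C5]
  exact eq_of_cubicForm_eq_zero (X_ne_zero 14) (X_ne_zero 15) cubicForm_A_B_C_eq_zero h1 h2 h3
end
end

section
/- With S₂(t₁,t₂) = s₀t₂² + s₁t₁t₂ + s₂t₁², where s₀ = a₂c₁ − a₁c₂, s₁ = −(a₂c₁' + a₂'c₁ − a₁c₂' − a₁'c₂), s₂ = a₂'c₁' − a₁'c₂', the polynomial identity ψ₆ = φ₆ + S₂(w(y), w'(y)) holds in the polynomial ring over ℚ in the fourteen coefficients and y₁,y₂,y₃. -/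
open MvPolynomial

noncomputable section

def s0 : R17 := a2*c1 - a1*c2
def s1 : R17 := -(a2*c1' + a2'*c1 - a1*c2' - a1'*c2)
def s2 : R17 := a2'*c1' - a1'*c2'

/-- S₂(t₁,t₂) = s₀t₂² + s₁t₁t₂ + s₂t₁². -/
def S2 (t t' : R17) : R17 := s0*t'^2 + s1*t*t' + s2*t^2

/-! The `C₅` terms of `ψ₆` and `φ₆` coincide, so `ψ₆ - φ₆ = A₂C₁ - A₁C₂ = r₃'`. Each of `A_i`, `C_i`
is a pencil `u·w' - u'·w`, and a difference of products of two such pencils is a binary quadratic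
form in `(w, w')`, namely `S₂`. -/

theorem ψ6_eq_φ6_add_r3' (q1 q2 q3 : R17) : ψ6 q1 q2 q3 = φ6 q1 q2 q3 + r3' := by
  rw [ψ6, φ6, r3']
  ring

theorem S2_eq_mul_sub_mul (t t' : R17) :
    S2 t t' = (a2*t' - a2'*t) * (c1*t' - c1'*t) - (a1*t' - a1'*t) * (c2*t' - c2'*t) := by
  rw [S2, s0, s1, s2]
  ring

theorem r3'_eq_S2 : r3' = S2 w w' := by
  rw [S2_eq_mul_sub_mul, r3', A1, A2, C1, C2]

theorem stmt7_general (q1 q2 q3 : R17) :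
    ψ6 q1 q2 q3 = φ6 q1 q2 q3 + S2 w w' := by
  rw [ψ6_eq_φ6_add_r3', r3'_eq_S2]

/-- The identity ψ₆ = φ₆ + S₂(w,w'). -/
theorem stmt7 (q1 q2 q3 : R17)
    (h1 : y2 * q1 = B1 + κ*y1*y3^2)
    (h2 : y2 * q2 = A1 - κ*y1^2*y3)
    (h3 : y1 * q3 = A2*y3 + B3*y2) :
    ψ6 q1 q2 q3 = φ6 q1 q2 q3 + S2 w w' :=
  stmt7_general q1 q2 q3
end
end

section
/- With the polynomials P₂, Q₄, R₃ defined in the context, the polynomial identity K² = −4φ₆³ + φ₆²·P₂(w,w') + φ₆·Q₄(w,w') + R₃(w,w')² holds in the polynomial ring over ℚ in the fourteen coefficients and y₁,y₂,y₃ (with w = w(y), w' = w'(y)). -/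
open MvPolynomial

noncomputable section

/-- P₂(t,t') = Σ pᵢtⁱt'^{2−i} with pᵢ = (−1)ⁱ{p₀}ᵢ, p₀ = b₂²−4a₂c₁−4b₁b₃+8a₁c₂.
Since Σᵢ {e}ᵢ xⁱ is e with every coefficient v replaced by v + x·v', this equals
p₀ with every coefficient v replaced by t'·v − t·v'. -/
def P2 (t t' : R17) : R17 :=
  (t'*b2 - t*b2')^2 - 4*(t'*a2 - t*a2')*(t'*c1 - t*c1')
    - 4*(t'*b1 - t*b1')*(t'*b3 - t*b3') + 8*(t'*a1 - t*a1')*(t'*c2 - t*c2')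

/-- R₃(t,t') = Σ rᵢtⁱt'^{3−i} with rᵢ = (−1)ⁱ{r₀}ᵢ,
r₀ = −a₁b₂c₂ + a₁b₃c₁ + a₂b₁c₂; each coefficient v replaced by t'·v − t·v'. -/
def R3 (t t' : R17) : R17 :=
  -((t'*a1 - t*a1')*(t'*b2 - t*b2')*(t'*c2 - t*c2'))
    + (t'*a1 - t*a1')*(t'*b3 - t*b3')*(t'*c1 - t*c1')
    + (t'*a2 - t*a2')*(t'*b1 - t*b1')*(t'*c2 - t*c2')

/-- Q₄(t,t') = Σ qᵢtⁱt'^{4−i} with qᵢ = (−1)ⁱ{q₀}ᵢ,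
q₀ = 4(a₁c₂ − b₁b₃)(a₂c₁ − a₁c₂) + 2b₂r₀. -/
def Q4 (t t' : R17) : R17 :=
  4*((t'*a1 - t*a1')*(t'*c2 - t*c2') - (t'*b1 - t*b1')*(t'*b3 - t*b3'))
      * ((t'*a2 - t*a2')*(t'*c1 - t*c1') - (t'*a1 - t*a1')*(t'*c2 - t*c2'))
    + 2*(t'*b2 - t*b2') * R3 t t'

/-!
Clearing the denominators y₁, y₂ of the exact quotients turns the identity into a polynomial
identity in the coefficients of an arbitrary ternary cubic form F and a point y, and that identity
holds modulo F(y). The cubic form with coefficients A₁, …, C₂ is w'·F − w·F', where F, F' are the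
forms with coefficients a₁, …, c₂ and a₁', …, c₂'; it vanishes at y since F(y) = w and F'(y) = w'.
-/

section TernaryCubic

variable {S : Type*} [CommRing S]

def ternaryCubic (a₁ a₂ b₁ b₂ b₃ c₁ c₂ y₁ y₂ y₃ : S) : S :=
  y₃^2*(a₁*y₁ + a₂*y₂) + y₃*(b₁*y₁^2 + b₂*y₁*y₂ + b₃*y₂^2) + c₁*y₁^2*y₂ + c₂*y₁*y₂^2

section Invariants

variable (a₁ a₂ b₁ b₂ b₃ c₁ c₂ : S)

def cubicP : S := b₂^2 - 4*a₂*c₁ - 4*b₁*b₃ + 8*a₁*c₂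

def cubicR : S := -(a₁*b₂*c₂) + a₁*b₃*c₁ + a₂*b₁*c₂

def cubicQ : S :=
  4*(a₁*c₂ - b₁*b₃)*(a₂*c₁ - a₁*c₂) + 2*b₂*cubicR a₁ a₂ b₁ b₂ b₃ c₁ c₂

end Invariants

theorem ternaryCubic_mul_sub_mul (a₁ a₂ b₁ b₂ b₃ c₁ c₂ a₁' a₂' b₁' b₂' b₃' c₁' c₂' s s'
    y₁ y₂ y₃ : S) :
    ternaryCubic (a₁*s - a₁'*s') (a₂*s - a₂'*s') (b₁*s - b₁'*s') (b₂*s - b₂'*s')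
        (b₃*s - b₃'*s') (c₁*s - c₁'*s') (c₂*s - c₂'*s') y₁ y₂ y₃
      = s * ternaryCubic a₁ a₂ b₁ b₂ b₃ c₁ c₂ y₁ y₂ y₃
        - s' * ternaryCubic a₁' a₂' b₁' b₂' b₃' c₁' c₂' y₁ y₂ y₃ := by
  unfold ternaryCubic
  ring

variable {a₁ a₂ b₁ b₂ b₃ c₁ c₂ k y₁ y₂ y₃ : S}

theorem cleared_identity_of_ternaryCubic_eq_zero
    (hF : ternaryCubic a₁ a₂ b₁ b₂ b₃ c₁ c₂ y₁ y₂ y₃ = 0) {N Φ Ψ : S}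
    (hN : N = a₂*y₁*(b₁ + k*y₁*y₃^2) + (a₁ - k*y₁^2*y₃)*(a₂*y₃ + b₃*y₂) + k*b₃*y₁^2*y₂*y₃)
    (hΦ : Φ = y₁*y₂*a₁*c₂ + y₃*N) (hΨ : Ψ = y₁*y₂*a₂*c₁ + y₃*N) :
    (y₁*Ψ*(a₁*y₃ + b₁*y₁) - y₂*Φ*(a₂*y₃ + b₃*y₂))^2
      = -4*Φ^3*(y₁*y₂) + Φ^2*(y₁*y₂)^2*cubicP a₁ a₂ b₁ b₂ b₃ c₁ c₂
        + Φ*(y₁*y₂)^3*cubicQ a₁ a₂ b₁ b₂ b₃ c₁ c₂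
        + (y₁*y₂)^4*(cubicR a₁ a₂ b₁ b₂ b₃ c₁ c₂)^2 := by
  subst hN hΦ hΨ
  unfold ternaryCubic at hF
  unfold cubicQ cubicP cubicR
  set Z := a₂*b₁*y₁ + a₁*b₃*y₂ + a₁*a₂*y₃
  linear_combination
    Z * (y₃*Z*(b₁*y₁^2 - b₂*y₁*y₂ + b₃*y₂^2 + y₃*(a₁*y₁ + a₂*y₂))
      + y₁*y₂*(y₁*c₁*(a₁*a₂*y₃ + a₂*b₁*y₁ - a₁*b₃*y₂)
        + y₂*c₂*(a₁*a₂*y₃ + a₁*b₃*y₂ - a₂*b₁*y₁))) * hF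

theorem sq_eq_of_ternaryCubic_eq_zero [NoZeroDivisors S]
    (hF : ternaryCubic a₁ a₂ b₁ b₂ b₃ c₁ c₂ y₁ y₂ y₃ = 0) (hy₁ : y₁ ≠ 0) (hy₂ : y₂ ≠ 0)
    {q₁ q₂ q₃ qK C₅ φ ψ : S}
    (h₁ : y₂*q₁ = b₁ + k*y₁*y₃^2) (h₂ : y₂*q₂ = a₁ - k*y₁^2*y₃) (h₃ : y₁*q₃ = a₂*y₃ + b₃*y₂)
    (hqK : y₂*qK = a₁*y₃ + b₁*y₁)
    (hC₅ : C₅ = a₂*q₁ + q₂*q₃ + k*b₃*y₁*y₃) (hφ : φ = a₁*c₂ + y₃*C₅) (hψ : ψ = a₂*c₁ + y₃*C₅) :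
    (ψ*qK - φ*q₃)^2 = -4*φ^3 + φ^2*cubicP a₁ a₂ b₁ b₂ b₃ c₁ c₂
      + φ*cubicQ a₁ a₂ b₁ b₂ b₃ c₁ c₂ + (cubicR a₁ a₂ b₁ b₂ b₃ c₁ c₂)^2 := by
  have hN : y₁*y₂*C₅
      = a₂*y₁*(b₁ + k*y₁*y₃^2) + (a₁ - k*y₁^2*y₃)*(a₂*y₃ + b₃*y₂) + k*b₃*y₁^2*y₂*y₃ := by
    rw [hC₅]
    linear_combination (a₂*y₁)*h₁ + (y₁*q₃)*h₂ + (a₁ - k*y₁^2*y₃)*h₃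
  have key := cleared_identity_of_ternaryCubic_eq_zero hF rfl
    (Φ := y₁*y₂*φ) (by rw [hφ]; linear_combination y₃*hN)
    (Ψ := y₁*y₂*ψ) (by rw [hψ]; linear_combination y₃*hN)
  apply mul_left_cancel₀ (pow_ne_zero 4 (mul_ne_zero hy₁ hy₂))
  calc (y₁*y₂)^4 * (ψ*qK - φ*q₃)^2
        = (y₁*(y₁*y₂*ψ)*(y₂*qK) - y₂*(y₁*y₂*φ)*(y₁*q₃))^2 := by ring
    _ = _ := by rw [hqK, h₃, key]
    _ = _ := by ring

end TernaryCubic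

theorem ternaryCubic_A_eq_zero : ternaryCubic A1 A2 B1 B2 B3 C1 C2 y1 y2 y3 = 0 := by
  rw [A1, A2, B1, B2, B3, C1, C2, ternaryCubic_mul_sub_mul]
  exact sub_eq_zero.mpr (mul_comm w' w)

theorem P2_w_w' : P2 w w' = cubicP A1 A2 B1 B2 B3 C1 C2 := by
  unfold P2 cubicP A1 A2 B1 B2 B3 C1 C2
  ring

theorem R3_w_w' : R3 w w' = cubicR A1 A2 B1 B2 B3 C1 C2 := by
  unfold R3 cubicR A1 A2 B1 B2 B3 C1 C2
  ring

theorem Q4_w_w' : Q4 w w' = cubicQ A1 A2 B1 B2 B3 C1 C2 := by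
  unfold Q4 cubicQ
  rw [R3_w_w']
  unfold A1 A2 B1 B2 B3 C1 C2
  ring

/-- The identity K² = −4φ₆³ + φ₆²P₂(w,w') + φ₆Q₄(w,w') + R₃(w,w')². -/
theorem stmt8 (q1 q2 q3 qK K : R17)
    (h1 : y2 * q1 = B1 + κ*y1*y3^2)
    (h2 : y2 * q2 = A1 - κ*y1^2*y3)
    (h3 : y1 * q3 = A2*y3 + B3*y2)
    (hqK : y2 * qK = A1*y3 + B1*y1)
    (hK : K = ψ6 q1 q2 q3 * qK - φ6 q1 q2 q3 * q3) :
    K^2 = -4 * (φ6 q1 q2 q3)^3 + (φ6 q1 q2 q3)^2 * P2 w w'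
      + φ6 q1 q2 q3 * Q4 w w' + (R3 w w')^2 := by
  rw [hK, P2_w_w', Q4_w_w', R3_w_w']
  exact sq_eq_of_ternaryCubic_eq_zero ternaryCubic_A_eq_zero (X_ne_zero _) (X_ne_zero _)
    h1 h2 h3 hqK rfl rfl rfl
end
end
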